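/- arXiv:2002.06659 — 2 statements merged into one kernel-verified Lean document; each statement's English description precedes it below -/
import Mathlib

section
/- Let a, b ∈ ℝⁿ be two vectors each with nonnegative entries summing to 1 and sorted in non-increasing order (i.e., 1 ≥ a₁ ≥ a₂ ≥ ⋯ ≥ aₙ ≥ 0 and similarly for b). Then the squared ℓ2 distance satisfies ∑ᵢ (aᵢ − bᵢ)² ≤ (n−1)/n. -/
/-!
Sorting puts the largest entries `x` of `a` and `y` of `b` at the same index. Hence
`∑ aᵢ² ≤ x`, `∑ bᵢ² ≤ y` and `∑ aᵢ bᵢ ≥ x y`, so `∑ (aᵢ - bᵢ)² ≤ x + y - 2 x y`.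
Since `x, y ∈ [1/n, 1]` and `x + y - 2 x y` is affine in each variable, its maximum is
attained at a corner of `[1/n, 1]²`, namely at `(1, 1/n)`, where it equals `1 - 1/n`.
-/

open Finset

section ProbabilityVector

variable {ι : Type*} [Fintype ι] {a b : ι → ℝ} {i₀ : ι}

lemma le_one_of_sum_eq_one (h0 : ∀ i, 0 ≤ a i) (h1 : ∑ i, a i = 1) (i : ι) : a i ≤ 1 :=
  h1 ▸ single_le_sum (fun j _ => h0 j) (mem_univ i)

lemma one_le_card_mul_of_sum_eq_one (h1 : ∑ i, a i = 1) (hmax : ∀ i, a i ≤ a i₀) :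
    1 ≤ Fintype.card ι * a i₀ := by
  simpa [h1] using sum_le_card_nsmul univ a (a i₀) fun i _ => hmax i

lemma sum_sq_le_of_sum_eq_one (h0 : ∀ i, 0 ≤ a i) (h1 : ∑ i, a i = 1)
    (hmax : ∀ i, a i ≤ a i₀) : ∑ i, a i ^ 2 ≤ a i₀ :=
  calc ∑ i, a i ^ 2 ≤ ∑ i, a i₀ * a i :=
        sum_le_sum fun i _ => by rw [sq]; exact mul_le_mul_of_nonneg_right (hmax i) (h0 i)
    _ = a i₀ := by rw [← mul_sum, h1, mul_one]

lemma sum_sub_sq_le_of_common_max (ha0 : ∀ i, 0 ≤ a i) (hb0 : ∀ i, 0 ≤ b i)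
    (haSum : ∑ i, a i = 1) (hbSum : ∑ i, b i = 1)
    (hamax : ∀ i, a i ≤ a i₀) (hbmax : ∀ i, b i ≤ b i₀) :
    ∑ i, (a i - b i) ^ 2 ≤ a i₀ + b i₀ - 2 * (a i₀ * b i₀) := by
  have hcross : a i₀ * b i₀ ≤ ∑ i, a i * b i :=
    single_le_sum (f := fun i => a i * b i) (fun i _ => mul_nonneg (ha0 i) (hb0 i))
      (mem_univ i₀)
  have hexpand : ∑ i, (a i - b i) ^ 2 = ∑ i, a i ^ 2 + ∑ i, b i ^ 2 - 2 * ∑ i, a i * b i := by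
    simp only [sub_sq, sum_add_distrib, sum_sub_distrib, mul_sum, mul_assoc]
    ring
  linarith [sum_sq_le_of_sum_eq_one ha0 haSum hamax, sum_sq_le_of_sum_eq_one hb0 hbSum hbmax]

end ProbabilityVector

lemma add_sub_two_mul_le_of_one_le_mul {n : ℕ} {x y : ℝ} (hx : 1 ≤ n * x) (hx1 : x ≤ 1)
    (hy : 1 ≤ n * y) (hy1 : y ≤ 1) : x + y - 2 * (x * y) ≤ (n - 1) / n := by
  have hn : (1 : ℝ) ≤ n := by nlinarith
  rw [le_div_iff₀ (by linarith)]
  rcases eq_or_lt_of_le hn with hn1 | hn1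
  · rw [← hn1] at hx hy ⊢
    nlinarith
  · have hn2 : (2 : ℝ) ≤ n := by exact_mod_cast (Nat.one_lt_cast.mp hn1 : 1 < n)
    -- `(n - 1) (n - 1 - n (x + y - 2xy)) = (n x - 1)(n y - 1) + n (n - 2)(1 - x)(1 - y)`
    nlinarith [mul_nonneg (sub_nonneg.mpr hx) (sub_nonneg.mpr hy),
      mul_nonneg (mul_nonneg (by linarith : (0 : ℝ) ≤ n) (sub_nonneg.mpr hn2))
        (mul_nonneg (sub_nonneg.mpr hx1) (sub_nonneg.mpr hy1))]

theorem sorted_prob_vec_sq_dist_le_general (n : ℕ) (a b : Fin n → ℝ)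
    (ha0 : ∀ i, 0 ≤ a i) (hb0 : ∀ i, 0 ≤ b i)
    (haSum : ∑ i, a i = 1) (hbSum : ∑ i, b i = 1)
    (haMono : ∀ i j : Fin n, i ≤ j → a j ≤ a i)
    (hbMono : ∀ i j : Fin n, i ≤ j → b j ≤ b i) :
    ∑ i, (a i - b i) ^ 2 ≤ ((n : ℝ) - 1) / n := by
  have hn : 0 < n := Nat.pos_of_ne_zero <| by rintro rfl; simp at haSum
  let i₀ : Fin n := ⟨0, hn⟩
  have hamax : ∀ i, a i ≤ a i₀ := fun i => haMono i₀ i (Nat.zero_le _)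
  have hbmax : ∀ i, b i ≤ b i₀ := fun i => hbMono i₀ i (Nat.zero_le _)
  calc ∑ i, (a i - b i) ^ 2 ≤ a i₀ + b i₀ - 2 * (a i₀ * b i₀) :=
        sum_sub_sq_le_of_common_max ha0 hb0 haSum hbSum hamax hbmax
    _ ≤ (n - 1) / n := by
        apply add_sub_two_mul_le_of_one_le_mul
        · simpa using one_le_card_mul_of_sum_eq_one haSum hamax
        · exact le_one_of_sum_eq_one ha0 haSum i₀
        · simpa using one_le_card_mul_of_sum_eq_one hbSum hbmax
        · exact le_one_of_sum_eq_one hb0 hbSum i₀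

/-- Two sorted (non-increasing) probability vectors in ℝⁿ have squared ℓ2
distance at most (n-1)/n. -/
theorem sorted_prob_vec_sq_dist_le (n : ℕ) (a b : Fin n → ℝ)
    (ha0 : ∀ i, 0 ≤ a i) (hb0 : ∀ i, 0 ≤ b i)
    (ha1 : ∀ i, a i ≤ 1) (hb1 : ∀ i, b i ≤ 1)
    (haSum : ∑ i, a i = 1) (hbSum : ∑ i, b i = 1)
    (haMono : ∀ i j : Fin n, i ≤ j → a j ≤ a i)
    (hbMono : ∀ i j : Fin n, i ≤ j → b j ≤ b i) :
    ∑ i, (a i - b i) ^ 2 ≤ ((n : ℝ) - 1) / n :=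
  sorted_prob_vec_sq_dist_le_general n a b ha0 hb0 haSum hbSum haMono hbMono
end

section
/- Let g, g̃ ∈ ℝⁿ be non-increasing vectors with ‖g − g̃‖₂ ≤ ε, and let σ, σ̃ be permutations that differ only by transposing two indices i and j where the corresponding entries satisfy |gᵢ − g_j| ≤ δ and |g̃ᵢ − g̃_j| ≤ δ. Then ‖σ⁻¹(g) − σ̃⁻¹(g̃)‖₁ ≤ ‖g − g̃‖₁ + |gᵢ − g̃_j| + |g_j − g̃ᵢ| ≤ ‖g − g̃‖₁ + 2δ + |gᵢ − g̃ᵢ| + |g_j − g̃_j|. -/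
open Finset

/-- The bound holds termwise: the swap fixes every `m ∉ {i, j}`, and at `i`, `j` the nonnegative
diagonal terms are slack. -/
theorem Equiv.sum_apply_swap_le {α M : Type*} [Fintype α] [DecidableEq α]
    [AddCommMonoid M] [PartialOrder M] [IsOrderedAddMonoid M]
    (F : α → α → M) (hF : ∀ a b, 0 ≤ F a b) (i j : α) :
    ∑ m, F m (Equiv.swap i j m) ≤ ∑ m, F m m + F i j + F j i := by
  have hpoint : ∀ m, F m (Equiv.swap i j m)
      ≤ F m m + (if m = i then F i j else 0) + (if m = j then F j i else 0) := by
    intro m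
    rcases eq_or_ne m i with rfl | hmi
    · rw [Equiv.swap_apply_left, if_pos rfl]
      exact le_add_of_le_of_nonneg (le_add_of_nonneg_left (hF m m)) (by split_ifs <;> simp [hF])
    rcases eq_or_ne m j with rfl | hmj
    · simpa [hmi] using le_add_of_nonneg_left (hF m m)
    simp [Equiv.swap_apply_of_ne_of_ne hmi hmj, hmi, hmj]
  calc ∑ m, F m (Equiv.swap i j m)
      ≤ ∑ m, (F m m + (if m = i then F i j else 0) + (if m = j then F j i else 0)) :=
        sum_le_sum fun m _ => hpoint m
    _ = ∑ m, F m m + F i j + F j i := by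
        simp only [sum_add_distrib, sum_ite_eq', mem_univ, if_true]

theorem Equiv.Perm.inv_apply_eq_swap_inv_apply {α : Type*} [DecidableEq α]
    {σ σ' : Equiv.Perm α} {i j : α} (h : ∀ k, σ' k = σ (Equiv.swap i j k)) (k : α) :
    σ'⁻¹ k = Equiv.swap i j (σ⁻¹ k) := by
  rw [show σ' = σ * Equiv.swap i j from Equiv.ext h, mul_inv_rev, Equiv.swap_inv]
  rfl

theorem abs_sub_add_abs_sub_le_cross (a b a' b' : ℝ) :
    |a - b'| + |b - a'| ≤ 2 * |a - b| + |a - a'| + |b - b'| := by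
  have h₁ := abs_sub_le a b b'
  have h₂ := abs_sub_le b a a'
  rw [abs_sub_comm b a] at h₂
  linarith

theorem transposed_permutation_l1_bound_general (n : ℕ) (g g' : Fin n → ℝ) (δ : ℝ)
    (σ σ' : Equiv.Perm (Fin n)) (i j : Fin n)
    (hσσ' : ∀ k, σ' k = σ (Equiv.swap i j k))
    (hδg : |g i - g j| ≤ δ) :
    ∑ k, |g (σ⁻¹ k) - g' (σ'⁻¹ k)|
      ≤ (∑ k, |g k - g' k|) + |g i - g' j| + |g j - g' i| ∧
    (∑ k, |g k - g' k|) + |g i - g' j| + |g j - g' i|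
      ≤ (∑ k, |g k - g' k|) + 2 * δ + |g i - g' i| + |g j - g' j| := by
  constructor
  · simp only [Equiv.Perm.inv_apply_eq_swap_inv_apply hσσ']
    rw [Equiv.sum_comp σ⁻¹ fun m => |g m - g' (Equiv.swap i j m)|]
    exact Equiv.sum_apply_swap_le (fun a b => |g a - g' b|) (fun _ _ => abs_nonneg _) i j
  · have := abs_sub_add_abs_sub_le_cross (g i) (g j) (g' i) (g' j)
    linarith

/-- If two ranking permutations differ only by transposing two indices i, j
whose entries are δ-close in both sorted vectors g and g̃, then the ℓ1 distance
between the reconstructed vectors σ⁻¹(g) and σ̃⁻¹(g̃) is controlled: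
it is at most ‖g - g̃‖₁ + |gᵢ - g̃ⱼ| + |gⱼ - g̃ᵢ|, which in turn is at most
‖g - g̃‖₁ + 2δ + |gᵢ - g̃ᵢ| + |gⱼ - g̃ⱼ|. -/
theorem transposed_permutation_l1_bound (n : ℕ) (g g' : Fin n → ℝ) (δ : ℝ)
    (hg : ∀ i j : Fin n, i ≤ j → g j ≤ g i)
    (hg' : ∀ i j : Fin n, i ≤ j → g' j ≤ g' i)
    (σ σ' : Equiv.Perm (Fin n)) (i j : Fin n)
    (hσσ' : ∀ k, σ' k = σ (Equiv.swap i j k))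
    (hδg : |g i - g j| ≤ δ) (hδg' : |g' i - g' j| ≤ δ) :
    ∑ k, |g (σ⁻¹ k) - g' (σ'⁻¹ k)|
      ≤ (∑ k, |g k - g' k|) + |g i - g' j| + |g j - g' i| ∧
    (∑ k, |g k - g' k|) + |g i - g' j| + |g j - g' i|
      ≤ (∑ k, |g k - g' k|) + 2 * δ + |g i - g' i| + |g j - g' j| :=
  transposed_permutation_l1_bound_general n g g' δ σ σ' i j hσσ' hδg
end
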